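/- Let N be a smooth 1-dimensional manifold without boundary and let γ = (γ₁, γ₂) : N → ℝ² be a smooth immersion satisfying condition (∗). Then for any nonempty open set U₁ × U₂ of N × N there exists (q₁, q₂) ∈ U₁ × U₂ such that det [ γ′(q₁) , γ(q₂) − γ(q₁) ] ≠ 0, i.e., γ₁′(q₁)(γ₂(q₂) − γ₂(q₁)) − γ₂′(q₁)(γ₁(q₂) − γ₁(q₁)) ≠ 0, where γ′(q₁) is the derivative of γ in a local coordinate t₁ around q₁. -/

import Mathlib

open Manifold

noncomputable section

abbrev E2 := EuclideanSpace ℝ (Fin 2)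
abbrev E1 := EuclideanSpace ℝ (Fin 1)

/-- The distance-squared mapping `D_p : ℝ² → ℝ²` associated to `p = (p₁, p₂)`. -/
def Dp (p₁ p₂ : E2) (x : E2) : E2 :=
  (EuclideanSpace.equiv (Fin 2) ℝ).symm ![‖x - p₁‖ ^ 2, ‖x - p₂‖ ^ 2]

variable {N : Type*} [TopologicalSpace N] [ChartedSpace E1 N]
  [IsManifold (𝓡 1) (⊤ : ℕ∞) N]

/-- The local-coordinate representative of `γ` around `q`, using the preferred chart. -/
def gammaLocal (γ : N → E2) (q : N) : ℝ → E2 :=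
  fun t => γ ((extChartAt (𝓡 1) q).symm (EuclideanSpace.single 0 t))

/-- The local coordinate of the point `q` itself. -/
def coord (q : N) : ℝ := extChartAt (𝓡 1) q q 0

/-- The curvature of `γ` at `q`, computed in the preferred local coordinate around `q`:
`κ(q) = (γ₁′γ₂″ − γ₂′γ₁″) / ((γ₁′)² + (γ₂′)²)^{3/2}`. -/
def curvatureAt (γ : N → E2) (q : N) : ℝ :=
  (deriv (gammaLocal γ q) (coord q) 0 * deriv (deriv (gammaLocal γ q)) (coord q) 1 -
   deriv (gammaLocal γ q) (coord q) 1 * deriv (deriv (gammaLocal γ q)) (coord q) 0) /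
  ((deriv (gammaLocal γ q) (coord q) 0 ^ 2 + deriv (gammaLocal γ q) (coord q) 1 ^ 2) ^ ((3:ℝ)/2))

/-- Condition (∗): on every nonempty open subset of `N` there is a point of nonzero curvature. -/
def SatisfiesStar (γ : N → E2) : Prop :=
  ∀ U : Set N, IsOpen U → U.Nonempty → ∃ q ∈ U, curvatureAt γ q ≠ 0

/-- `det [u, v] = u₁v₂ − u₂v₁` for `u, v ∈ ℝ²`. -/
def det2 (u v : E2) : ℝ := u 0 * v 1 - u 1 * v 0

/-!
If the determinant vanished on all of `U₁ × U₂`, pick `q₁ ∈ U₁` with `κ(q₁) ≠ 0`, so that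
`v = γ′(q₁) ≠ 0`. Then `γ` maps `U₂` into the line through `γ(q₁)` in direction `v`, i.e. the
linear functional `det2 v` is constant along `γ` on `U₂`. Hence `det2 v` kills both `γ′` and
`γ″` in local coordinates, which makes them parallel, so `κ` vanishes on `U₂`, contradicting (∗).
No regularity of `γ` is needed: where `γ` is not differentiable, `deriv` is `0`.
-/

open Filter Topology

section Calculus

variable {𝕜 : Type*} [NontriviallyNormedField 𝕜] {E F : Type*} [NormedAddCommGroup E]
  [NormedSpace 𝕜 E] [NormedAddCommGroup F] [NormedSpace 𝕜 F]

theorem ContinuousLinearMap.map_deriv_eq_zero_of_eventually_eq (φ : E →L[𝕜] F) {g : 𝕜 → E}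
    {t : 𝕜} {c : F} (h : ∀ᶠ s in 𝓝 t, φ (g s) = c) : φ (deriv g t) = 0 := by
  by_cases hg : DifferentiableAt 𝕜 g t
  · rw [← (φ.hasFDerivAt.comp_hasDerivAt t hg.hasDerivAt).deriv]
    exact (EventuallyEq.deriv_eq (f := fun _ => c) h).trans (deriv_const t c)
  · rw [deriv_zero_of_not_differentiableAt hg, map_zero]

theorem ContinuousLinearMap.map_deriv_and_map_deriv_deriv_eq_zero_of_eventually_eq
    (φ : E →L[𝕜] F) {g : 𝕜 → E} {t : 𝕜} {c : F} (h : ∀ᶠ s in 𝓝 t, φ (g s) = c) :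
    φ (deriv g t) = 0 ∧ φ (deriv (deriv g) t) = 0 := by
  have h' : ∀ᶠ s in 𝓝 t, φ (deriv g s) = 0 :=
    h.eventually_nhds.mono fun _ hs => φ.map_deriv_eq_zero_of_eventually_eq hs
  exact ⟨h'.self_of_nhds, φ.map_deriv_eq_zero_of_eventually_eq h'⟩

end Calculus

section Det2

def det2CLM (v : E2) : E2 →L[ℝ] ℝ :=
  v 0 • EuclideanSpace.proj 1 - v 1 • EuclideanSpace.proj 0

@[simp]
theorem det2CLM_apply (v x : E2) : det2CLM v x = det2 v x := by
  simp [det2CLM, det2]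

theorem det2_eq_zero_of_det2_eq_zero {v a b : E2} (hv : v ≠ 0) (ha : det2 v a = 0)
    (hb : det2 v b = 0) : det2 a b = 0 := by
  unfold det2 at *
  by_contra hab
  have hv₀ : v 0 * (a 0 * b 1 - a 1 * b 0) = 0 := by linear_combination a 0 * hb - b 0 * ha
  have hv₁ : v 1 * (a 0 * b 1 - a 1 * b 0) = 0 := by linear_combination a 1 * hb - b 1 * ha
  refine hv ?_
  ext i
  fin_cases i
  · exact (mul_eq_zero.mp hv₀).resolve_right hab
  · exact (mul_eq_zero.mp hv₁).resolve_right hab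

end Det2

section Curvature

variable {M : Type*} [TopologicalSpace M] [ChartedSpace E1 M]

theorem single_coord (q : M) :
    EuclideanSpace.single (0 : Fin 1) (coord q) = extChartAt (𝓡 1) q q := by
  ext j
  fin_cases j
  simp [coord]

theorem eventually_extChartAt_symm_single_mem {q : M} {U : Set M} (hU : U ∈ 𝓝 q) :
    ∀ᶠ t in 𝓝 (coord q), (extChartAt (𝓡 1) q).symm (EuclideanSpace.single 0 t) ∈ U := by
  have hcont : Tendsto
      (fun t : ℝ => (extChartAt (𝓡 1) q).symm (EuclideanSpace.single 0 t)) (𝓝 (coord q)) (𝓝 q) := by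
    have hsingle : ContinuousAt (fun t : ℝ => EuclideanSpace.single (0 : Fin 1) t) (coord q) :=
      ((PiLp.continuous_toLp 2 _).comp (continuous_single (A := fun _ : Fin 1 => ℝ) 0)).continuousAt
    have hsymm := continuousAt_extChartAt_symm (I := 𝓡 1) q
    rw [ContinuousAt, extChartAt_to_inv, ← single_coord] at hsymm
    exact hsymm.comp hsingle
  exact hcont hU

theorem deriv_gammaLocal_ne_zero_of_curvatureAt_ne_zero {γ : M → E2} {q : M}
    (h : curvatureAt γ q ≠ 0) : deriv (gammaLocal γ q) (coord q) ≠ 0 := by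
  contrapose! h
  simp [curvatureAt, h]

theorem curvatureAt_eq_zero_of_det2_eq_zero {γ : M → E2} {q : M}
    (h : det2 (deriv (gammaLocal γ q) (coord q)) (deriv (deriv (gammaLocal γ q)) (coord q)) = 0) :
    curvatureAt γ q = 0 := by
  unfold curvatureAt
  unfold det2 at h
  rw [h, zero_div]

theorem curvatureAt_eq_zero_of_eventually_det2_eq_zero {γ : M → E2} {q : M} {v p : E2}
    (hv : v ≠ 0) (h : ∀ᶠ t in 𝓝 (coord q), det2 v (gammaLocal γ q t - p) = 0) :
    curvatureAt γ q = 0 := by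
  have hconst : ∀ᶠ t in 𝓝 (coord q), det2CLM v (gammaLocal γ q t) = det2CLM v p :=
    h.mono fun t ht => by rwa [← det2CLM_apply, map_sub, sub_eq_zero] at ht
  obtain ⟨h₁, h₂⟩ := (det2CLM v).map_deriv_and_map_deriv_deriv_eq_zero_of_eventually_eq hconst
  rw [det2CLM_apply] at h₁ h₂
  exact curvatureAt_eq_zero_of_det2_eq_zero (det2_eq_zero_of_det2_eq_zero hv h₁ h₂)

end Curvature

theorem stmt8 (γ : N → E2)
    (hstar : SatisfiesStar γ)
    (U₁ U₂ : Set N) (hU₁ : IsOpen U₁) (hU₂ : IsOpen U₂)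
    (hne₁ : U₁.Nonempty) (hne₂ : U₂.Nonempty) :
    ∃ q₁ ∈ U₁, ∃ q₂ ∈ U₂,
      det2 (deriv (gammaLocal γ q₁) (coord q₁)) (γ q₂ - γ q₁) ≠ 0 := by
  by_contra! hline
  obtain ⟨q₁, hq₁, hκ₁⟩ := hstar U₁ hU₁ hne₁
  obtain ⟨q₂, hq₂, hκ₂⟩ := hstar U₂ hU₂ hne₂
  have hγ_on_line : ∀ᶠ t in 𝓝 (coord q₂),
      det2 (deriv (gammaLocal γ q₁) (coord q₁)) (gammaLocal γ q₂ t - γ q₁) = 0 :=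
    (eventually_extChartAt_symm_single_mem (hU₂.mem_nhds hq₂)).mono
      fun _ ht => hline q₁ hq₁ _ ht
  exact hκ₂ (curvatureAt_eq_zero_of_eventually_det2_eq_zero
    (deriv_gammaLocal_ne_zero_of_curvatureAt_ne_zero hκ₁) hγ_on_line)
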